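/- arXiv:2402.07160 — 4 statements merged into one kernel-verified Lean document; each statement's English description precedes it below -/
import Mathlib

section
/- Let N ≥ 1 and L ≥ 0 be integers, let (𝒳, 𝒜) be a measurable space, and let {X_ℓ^i : ℓ = 0,…,L, i = 1,…,N} be independent and identically distributed 𝒳-valued random variables. Let φ : 𝒳^{L+1} → ℝ be measurable and such that φ(X_0^1, …, X_L^1) is square-integrable. Then: (a) for every index tuple (i_0, …, i_L) ∈ {1,…,N}^{L+1}, Var(φ(X_0^{i_0}, …, X_L^{i_L})) = Var(φ(X_0^1, …, X_L^1)) =: v; and (b) Var( Σ_{i_0=1}^N ⋯ Σ_{i_L=1}^N φ(X_0^{i_0}, …, X_L^{i_L}) ) ≤ N^{L+1} ( N^{L+1} − (N−1)^{L+1} ) · v. -/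
/-!
Each summand is `φ` applied to the vector `(X ℓ (j ℓ))_ℓ`, whose coordinates are independent with
the common marginals, so its law is the same product measure for every `j`; this gives (a).
For (b), expand the variance of the sum as `∑_{j,k} cov(φ_j, φ_k)`. If `j ℓ ≠ k ℓ` for every `ℓ`,
the two summands depend on disjoint sets of the `X`s and are independent, so the covariance
vanishes; every other covariance is at most `v` because `2 cov(Y, Z) ≤ Var Y + Var Z`. The
remaining pairs `(j, k)`, those agreeing in some coordinate, number
`N^{L+1} (N^{L+1} - (N-1)^{L+1})`.
-/

open MeasureTheory ProbabilityTheory Finset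

section Moments

variable {Ω : Type*} [MeasurableSpace Ω] {μ : Measure Ω}

lemma two_mul_covariance_le_variance_add_variance [IsFiniteMeasure μ] {X Y : Ω → ℝ}
    (hX : MemLp X 2 μ) (hY : MemLp Y 2 μ) : 2 * cov[X, Y; μ] ≤ Var[X; μ] + Var[Y; μ] := by
  have := variance_nonneg (X - Y) μ
  rw [variance_sub hX hY] at this
  linarith

lemma variance_fun_sum_le_card_mul [IsFiniteMeasure μ] {ι : Type*} [Fintype ι]
    {Y : ι → Ω → ℝ} (hY : ∀ i, MemLp (Y i) 2 μ) {v : ℝ} (hv : ∀ i, Var[Y i; μ] ≤ v)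
    (T : Finset (ι × ι)) (hT : ∀ p ∉ T, IndepFun (Y p.1) (Y p.2) μ) :
    Var[fun ω ↦ ∑ i, Y i ω; μ] ≤ #T * v := by
  have hcov (p : ι × ι) : cov[Y p.1, Y p.2; μ] ≤ v := by
    linarith [two_mul_covariance_le_variance_add_variance (hY p.1) (hY p.2), hv p.1, hv p.2]
  rw [variance_fun_sum hY, ← Fintype.sum_prod_type', ← Finset.sum_subset (subset_univ T)
    fun p _ hp ↦ (hT p hp).covariance_eq_zero (hY _) (hY _), ← nsmul_eq_mul]
  exact sum_le_card_nsmul _ _ _ fun p _ ↦ hcov p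

end Moments

namespace ProbabilityTheory

variable {Ω Ω' ι : Type*} [MeasurableSpace Ω] [MeasurableSpace Ω'] {μ : Measure Ω} {ν : Measure Ω'}
  {β : ι → Type*} [∀ i, MeasurableSpace (β i)]

lemma iIndepFun.identDistrib_pi [Fintype ι] {f : ∀ i, Ω → β i} {g : ∀ i, Ω' → β i}
    (hf : iIndepFun f μ) (hg : iIndepFun g ν) (h : ∀ i, IdentDistrib (f i) (g i) μ ν) :
    IdentDistrib (fun ω i ↦ f i ω) (fun ω i ↦ g i ω) μ ν where
  aemeasurable_fst := aemeasurable_pi_lambda _ fun i ↦ (h i).aemeasurable_fst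
  aemeasurable_snd := aemeasurable_pi_lambda _ fun i ↦ (h i).aemeasurable_snd
  map_eq := by
    rw [hf.map_fun_eq_pi_map fun i ↦ (h i).aemeasurable_fst,
      hg.map_fun_eq_pi_map fun i ↦ (h i).aemeasurable_snd]
    simp_rw [(h _).map_eq]

lemma iIndepFun.indepFun_of_disjoint_range {κ κ' : Type*} [Finite κ] [Finite κ']
    {f : ∀ i, Ω → β i} (hf : iIndepFun f μ) (hmeas : ∀ i, Measurable (f i))
    {g : κ → ι} {h : κ' → ι} (hgh : Disjoint (Set.range g) (Set.range h)) :
    IndepFun (fun ω k ↦ f (g k) ω) (fun ω k ↦ f (h k) ω) μ := by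
  classical
  have := Fintype.ofFinite κ
  have := Fintype.ofFinite κ'
  have hST : Disjoint (univ.image g) (univ.image h) := by
    rw [← disjoint_coe]
    simpa using hgh
  exact (hf.indepFun_finset _ _ hST hmeas).comp
    (φ := fun x k ↦ x ⟨g k, mem_image_of_mem g (mem_univ k)⟩)
    (ψ := fun x k ↦ x ⟨h k, mem_image_of_mem h (mem_univ k)⟩) (by fun_prop) (by fun_prop)

end ProbabilityTheory

lemma card_filter_forall_apply_ne (α β : Type*) [Fintype α] [DecidableEq α] [Fintype β]
    [DecidableEq β] :
    #{p : (α → β) × (α → β) | ∀ a, p.1 a ≠ p.2 a}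
      = (Fintype.card β * (Fintype.card β - 1)) ^ Fintype.card α := by
  rw [← Fintype.card_subtype]
  have e : {p : (α → β) × (α → β) // ∀ a, p.1 a ≠ p.2 a} ≃ (α → {q : β × β // q.1 ≠ q.2}) :=
    ((Equiv.arrowProdEquivProdArrow α (fun _ ↦ β) (fun _ ↦ β)).symm.subtypeEquiv
      fun _ ↦ Iff.rfl).trans (Equiv.subtypePiEquivPi (p := fun _ q ↦ q.1 ≠ q.2))
  have hoff : ({q : β × β | q.1 ≠ q.2} : Finset (β × β)) = univ.offDiag := by
    ext; simp
  rw [Fintype.card_congr e, Fintype.card_fun, Fintype.card_subtype, hoff, offDiag_card,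
    card_univ, Nat.mul_sub_one]

-- The decidability instance is a parameter because for `α = Fin n` instance search decides the
-- existential by `Nat.decidableExistsFin`, not by `Fintype.decidableExistsFintype`.
lemma card_filter_exists_apply_eq (α β : Type*) [Fintype α] [DecidableEq α] [Fintype β]
    [DecidableEq β] [DecidablePred fun p : (α → β) × (α → β) ↦ ∃ a, p.1 a = p.2 a] :
    #{p : (α → β) × (α → β) | ∃ a, p.1 a = p.2 a}
      = Fintype.card β ^ Fintype.card α
        * (Fintype.card β ^ Fintype.card α - (Fintype.card β - 1) ^ Fintype.card α) := by
  have h := card_filter_add_card_filter_not (s := univ)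
    (fun p : (α → β) × (α → β) ↦ ∃ a, p.1 a = p.2 a)
  simp only [not_exists, ← ne_eq] at h
  rw [card_filter_forall_apply_ne, card_univ, Fintype.card_prod, Fintype.card_fun] at h
  rw [Nat.mul_sub, ← mul_pow _ (_ - 1)]
  omega

/-- Variance identity and variance bound for sums of product-indexed evaluations of an
i.i.d. array `X ℓ i` of `𝒳`-valued random variables. -/
theorem stmt0 {Ω 𝒳 : Type*} [MeasurableSpace Ω] [MeasurableSpace 𝒳]
    (P : Measure Ω) [IsProbabilityMeasure P]
    (N L : ℕ) (hN : 1 ≤ N)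
    (X : Fin (L + 1) → Fin N → Ω → 𝒳)
    (hmeas : ∀ ℓ i, Measurable (X ℓ i))
    (hindep : iIndepFun (fun (p : Fin (L + 1) × Fin N) => X p.1 p.2) P)
    (hident : ∀ p q : Fin (L + 1) × Fin N, IdentDistrib (X p.1 p.2) (X q.1 q.2) P P)
    (φ : (Fin (L + 1) → 𝒳) → ℝ) (hφ : Measurable φ)
    (hL2 : MemLp (fun ω => φ fun ℓ => X ℓ ⟨0, hN⟩ ω) 2 P) :
    (∀ j : Fin (L + 1) → Fin N,
      variance (fun ω => φ fun ℓ => X ℓ (j ℓ) ω) P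
        = variance (fun ω => φ fun ℓ => X ℓ ⟨0, hN⟩ ω) P) ∧
    variance (fun ω => ∑ j : Fin (L + 1) → Fin N, φ fun ℓ => X ℓ (j ℓ) ω) P
      ≤ (N : ℝ) ^ (L + 1) * ((N : ℝ) ^ (L + 1) - ((N : ℝ) - 1) ^ (L + 1)) *
        variance (fun ω => φ fun ℓ => X ℓ ⟨0, hN⟩ ω) P := by
  have hrow (j : Fin (L + 1) → Fin N) : iIndepFun (fun ℓ ↦ X ℓ (j ℓ)) P :=
    hindep.precomp (g := fun ℓ ↦ (ℓ, j ℓ)) fun _ _ h ↦ congrArg Prod.fst h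
  have hdistrib (j : Fin (L + 1) → Fin N) : IdentDistrib (fun ω ↦ φ fun ℓ ↦ X ℓ (j ℓ) ω)
      (fun ω ↦ φ fun ℓ ↦ X ℓ ⟨0, hN⟩ ω) P P :=
    ((hrow j).identDistrib_pi (hrow _) fun ℓ ↦ hident (ℓ, j ℓ) (ℓ, ⟨0, hN⟩)).comp hφ
  have hvar (j : Fin (L + 1) → Fin N) := (hdistrib j).variance_eq
  have hpair (j k : Fin (L + 1) → Fin N) (hjk : ∀ ℓ, j ℓ ≠ k ℓ) :
      IndepFun (fun ω ↦ φ fun ℓ ↦ X ℓ (j ℓ) ω) (fun ω ↦ φ fun ℓ ↦ X ℓ (k ℓ) ω) P := by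
    have hdisj : Disjoint (Set.range fun ℓ ↦ (ℓ, j ℓ)) (Set.range fun ℓ ↦ (ℓ, k ℓ)) := by
      simp [Set.disjoint_range_iff, hjk]
    exact (hindep.indepFun_of_disjoint_range (fun q ↦ hmeas q.1 q.2) hdisj).comp hφ hφ
  have hcard : (#{p : (Fin (L + 1) → Fin N) × (Fin (L + 1) → Fin N) | ∃ ℓ, p.1 ℓ = p.2 ℓ} : ℝ)
      = (N : ℝ) ^ (L + 1) * ((N : ℝ) ^ (L + 1) - ((N : ℝ) - 1) ^ (L + 1)) := by
    rw [card_filter_exists_apply_eq, Fintype.card_fin, Fintype.card_fin, Nat.cast_mul,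
      Nat.cast_sub (Nat.pow_le_pow_left (Nat.sub_le N 1) _)]
    push_cast [Nat.cast_sub hN]
    ring
  refine ⟨hvar, hcard ▸ variance_fun_sum_le_card_mul (fun j ↦ (hdistrib j).symm.memLp_snd hL2)
    (fun j ↦ (hvar j).le) _ fun p hp ↦ hpair p.1 p.2 ?_⟩
  simpa using hp
end

section
/- Let N ≥ 1 and L ≥ 0 be integers, let (𝒳, 𝒜) be a measurable space, and for each ℓ = 0,…,L let ν_ℓ be a probability measure on 𝒳. Let {X_ℓ^i : ℓ = 0,…,L, i = 1,…,N} be independent 𝒳-valued random variables with X_ℓ^i distributed according to ν_ℓ for every i. Then for every bounded measurable φ : 𝒳^{L+1} → ℝ, E[ ( N^{−(L+1)} Σ_{i_0=1}^N ⋯ Σ_{i_L=1}^N φ(X_0^{i_0}, …, X_L^{i_L}) − ∫ φ d(ν_0 ⊗ ν_1 ⊗ ⋯ ⊗ ν_L) )² ] ≤ c_{N,L} · ‖φ‖_∞², where c_{N,L} = 1 − (1 − 1/N)^{L+1}. -/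
/-!
Write `Y_j = (X_0^{j_0}, …, X_L^{j_L})` for a multi-index `j`, so that the estimator is the
average of the `N^{L+1}` variables `φ(Y_j)`, each of law `ν_0 ⊗ ⋯ ⊗ ν_L` and mean `∫ φ`.
Its mean squared error is therefore `N^{-2(L+1)} ∑_{j,j'} cov(φ(Y_j), φ(Y_{j'}))`.
If `j` and `j'` differ in every coordinate, `Y_j` and `Y_{j'}` are built from disjoint sets of
independent variables, so the covariance vanishes; otherwise it is at most `‖φ‖∞²`. The fraction of
pairs `(j, j')` agreeing in some coordinate is `1 - (1 - 1/N)^{L+1}`.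
-/

open MeasureTheory ProbabilityTheory Finset

lemma Finset.sum_pi_prod_ite_eq_zero_one {ι α : Type*} [Fintype ι] [DecidableEq ι] [Fintype α]
    [DecidableEq α] [Nonempty α] (a : ι → α) :
    ∑ b : ι → α, ∏ i, (if a i = b i then 0 else 1 : ℝ) = (Fintype.card α - 1) ^ Fintype.card ι := by
  rw [← Fintype.prod_sum fun i x ↦ if a i = x then (0 : ℝ) else 1]
  simp [sum_ite, filter_ne, Nat.cast_pred Fintype.card_pos]

lemma Finset.inv_card_sq_mul_sum_sum_one_sub_prod_ite {ι α : Type*} [Fintype ι] [DecidableEq ι]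
    [Fintype α] [DecidableEq α] [Nonempty α] :
    ((Fintype.card (ι → α) : ℝ)⁻¹) ^ 2
        * ∑ a : ι → α, ∑ b : ι → α, (1 - ∏ i, if a i = b i then 0 else 1 : ℝ)
      = 1 - (1 - 1 / (Fintype.card α : ℝ)) ^ Fintype.card ι := by
  have hα : (Fintype.card α : ℝ) ≠ 0 := by positivity
  simp only [sum_sub_distrib, sum_pi_prod_ite_eq_zero_one, sum_const, card_univ, nsmul_eq_mul,
    mul_one, Fintype.card_pi, prod_const, Nat.cast_pow, one_sub_div hα, div_pow]
  field_simp

namespace ProbabilityTheory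

variable {Ω : Type*} [MeasurableSpace Ω] {μ : Measure Ω}

lemma covariance_le_sq_of_abs_le_of_integral_eq [IsProbabilityMeasure μ] {X Y : Ω → ℝ} {C : ℝ}
    (hXm : AEStronglyMeasurable X μ) (hYm : AEStronglyMeasurable Y μ)
    (hX : ∀ᵐ ω ∂μ, |X ω| ≤ C) (hY : ∀ᵐ ω ∂μ, |Y ω| ≤ C) (hXY : μ[X] = μ[Y]) :
    cov[X, Y; μ] ≤ C ^ 2 := by
  have hXY_le : ∀ᵐ ω ∂μ, ‖(X * Y) ω‖ ≤ C ^ 2 := by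
    filter_upwards [hX, hY] with ω hXω hYω
    rw [Pi.mul_apply, norm_mul, Real.norm_eq_abs, Real.norm_eq_abs, sq]
    exact mul_le_mul hXω hYω (abs_nonneg _) ((abs_nonneg _).trans hXω)
  calc cov[X, Y; μ] = μ[X * Y] - μ[Y] ^ 2 := by
        rw [covariance_eq_sub (MemLp.of_bound hXm C (by simpa using hX))
          (MemLp.of_bound hYm C (by simpa using hY)), hXY, sq]
    _ ≤ ‖μ[X * Y]‖ := (sub_le_self _ (sq_nonneg _)).trans (Real.le_norm_self _)
    _ ≤ C ^ 2 := by simpa using norm_integral_le_of_norm_le_const hXY_le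

lemma integral_sq_average_sub_le [IsProbabilityMeasure μ] {ι : Type*} [Fintype ι]
    {G : ι → Ω → ℝ} (hG : ∀ i, MemLp (G i) 2 μ) {m : ℝ} (hm : ∀ i, μ[G i] = m)
    (hι : Fintype.card ι ≠ 0) {c : ι → ι → ℝ} (hc : ∀ i j, cov[G i, G j; μ] ≤ c i j) :
    ∫ ω, ((Fintype.card ι : ℝ)⁻¹ * ∑ i, G i ω - m) ^ 2 ∂μ
      ≤ ((Fintype.card ι : ℝ)⁻¹) ^ 2 * ∑ i, ∑ j, c i j := by
  have hsum : MemLp (fun ω ↦ ∑ i, G i ω) 2 μ := memLp_finsetSum _ fun i _ ↦ hG i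
  have hmean : μ[fun ω ↦ (Fintype.card ι : ℝ)⁻¹ * ∑ i, G i ω] = m := by
    rw [integral_const_mul, integral_finsetSum _ fun i _ ↦ (hG i).integrable one_le_two]
    simp [hm, hι]
  rw [← hmean, ← variance_eq_integral (hsum.const_mul _).aemeasurable, variance_const_mul,
    variance_fun_sum hG]
  gcongr with i _ j _
  exact hc i j

section Tuples

variable {κ ι 𝒳 : Type*} [MeasurableSpace 𝒳] [Fintype ι] {X : κ → Ω → 𝒳}

lemma iIndepFun.indepFun_tuple_of_disjoint_range {ι' : Type*} [Fintype ι'] (h : iIndepFun X μ)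
    (hX : ∀ k, Measurable (X k)) {g : ι → κ} {g' : ι' → κ}
    (hg : Disjoint (Set.range g) (Set.range g')) :
    IndepFun (fun ω i ↦ X (g i) ω) (fun ω i ↦ X (g' i) ω) μ := by
  classical
  have hST : Disjoint (univ.image g) (univ.image g') := by
    simpa [← Finset.disjoint_coe] using hg
  exact (h.indepFun_finset _ _ hST hX).comp
    (measurable_pi_lambda _ fun i ↦ measurable_pi_apply ⟨g i, mem_image_of_mem g (mem_univ i)⟩)
    (measurable_pi_lambda _ fun i ↦ measurable_pi_apply ⟨g' i, mem_image_of_mem g' (mem_univ i)⟩)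

lemma iIndepFun.covariance_comp_tuple_eq_zero {ι' : Type*} [Fintype ι'] (h : iIndepFun X μ)
    (hX : ∀ k, Measurable (X k)) {g : ι → κ} {g' : ι' → κ}
    (hg : Disjoint (Set.range g) (Set.range g')) {φ : (ι → 𝒳) → ℝ} {ψ : (ι' → 𝒳) → ℝ}
    (hφ : Measurable φ) (hψ : Measurable ψ) {C D : ℝ} (hφC : ∀ x, |φ x| ≤ C)
    (hψD : ∀ x, |ψ x| ≤ D) :
    cov[fun ω ↦ φ fun i ↦ X (g i) ω, fun ω ↦ ψ fun i ↦ X (g' i) ω; μ] = 0 := by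
  have := h.isProbabilityMeasure
  refine ((h.indepFun_tuple_of_disjoint_range hX hg).comp hφ hψ).covariance_eq_zero
    (.of_bound ?_ C (ae_of_all _ fun ω ↦ hφC _)) (.of_bound ?_ D (ae_of_all _ fun ω ↦ hψD _))
  · exact (hφ.comp (measurable_pi_lambda _ fun i ↦ hX (g i))).aestronglyMeasurable
  · exact (hψ.comp (measurable_pi_lambda _ fun i ↦ hX (g' i))).aestronglyMeasurable

lemma iIndepFun.integral_comp_tuple (h : iIndepFun X μ) (hX : ∀ k, Measurable (X k))
    {g : ι → κ} (hg : g.Injective) {ν : ι → Measure 𝒳} (hν : ∀ i, μ.map (X (g i)) = ν i)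
    {φ : (ι → 𝒳) → ℝ} (hφ : Measurable φ) :
    μ[fun ω ↦ φ fun i ↦ X (g i) ω] = ∫ x, φ x ∂(Measure.pi ν) := by
  have hlaw : μ.map (fun ω i ↦ X (g i) ω) = Measure.pi ν := by
    rw [(h.precomp hg).map_fun_eq_pi_map fun i ↦ (hX _).aemeasurable]
    simp only [hν]
  rw [← hlaw, integral_map (measurable_pi_lambda _ fun i ↦ hX (g i)).aemeasurable
    hφ.aestronglyMeasurable]

end Tuples

end ProbabilityTheory

theorem stmt3_general {Ω 𝒳 : Type*} [MeasurableSpace Ω] [MeasurableSpace 𝒳]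
    (P : Measure Ω) [IsProbabilityMeasure P]
    (N L : ℕ) (hN : 1 ≤ N)
    (ν : Fin (L + 1) → Measure 𝒳)
    (X : Fin (L + 1) → Fin N → Ω → 𝒳)
    (hmeas : ∀ ℓ i, Measurable (X ℓ i))
    (hindep : iIndepFun (fun p : Fin (L + 1) × Fin N => X p.1 p.2) P)
    (hlaw : ∀ ℓ i, Measure.map (X ℓ i) P = ν ℓ)
    (φ : (Fin (L + 1) → 𝒳) → ℝ) (hφmeas : Measurable φ)
    (C : ℝ) (hφb : ∀ x, |φ x| ≤ C) :
    ∫ ω, (((N : ℝ) ^ (L + 1))⁻¹ *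
          (∑ j : Fin (L + 1) → Fin N, φ fun ℓ => X ℓ (j ℓ) ω)
        - ∫ x, φ x ∂(Measure.pi ν)) ^ 2 ∂P
      ≤ (1 - (1 - 1 / (N : ℝ)) ^ (L + 1)) * C ^ 2 := by
  let G (j : Fin (L + 1) → Fin N) (ω : Ω) : ℝ := φ fun ℓ ↦ X ℓ (j ℓ) ω
  have hmeas' (p : Fin (L + 1) × Fin N) : Measurable (X p.1 p.2) := hmeas p.1 p.2
  have hGm (j) : AEStronglyMeasurable (G j) P :=
    (hφmeas.comp (measurable_pi_lambda _ fun ℓ ↦ hmeas ℓ (j ℓ))).aestronglyMeasurable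
  have hGb (j) : ∀ᵐ ω ∂P, |G j ω| ≤ C := ae_of_all _ fun ω ↦ hφb _
  have hG2 (j) : MemLp (G j) 2 P := MemLp.of_bound (hGm j) C (by simpa using hGb j)
  have hmean (j) : P[G j] = ∫ x, φ x ∂(Measure.pi ν) :=
    hindep.integral_comp_tuple hmeas' (fun _ _ h ↦ (Prod.mk.inj h).1) (fun ℓ ↦ hlaw ℓ (j ℓ)) hφmeas
  have hcov (j j') : cov[G j, G j'; P] ≤ C ^ 2 * (1 - ∏ ℓ, if j ℓ = j' ℓ then 0 else 1) := by
    by_cases hjj' : ∀ ℓ, j ℓ ≠ j' ℓ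
    · have hdisj : Disjoint (Set.range fun ℓ ↦ (ℓ, j ℓ)) (Set.range fun ℓ ↦ (ℓ, j' ℓ)) := by
        simpa [Set.disjoint_left] using fun ℓ h ↦ hjj' ℓ h.symm
      rw [prod_eq_one fun ℓ _ ↦ if_neg (hjj' ℓ), sub_self, mul_zero]
      exact (hindep.covariance_comp_tuple_eq_zero hmeas' hdisj hφmeas hφmeas hφb hφb).le
    · obtain ⟨ℓ, hℓ⟩ := not_forall_not.mp hjj'
      rw [prod_eq_zero (mem_univ ℓ) (by rw [if_pos hℓ]), sub_zero, mul_one]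
      exact covariance_le_sq_of_abs_le_of_integral_eq (hGm j) (hGm j') (hGb j) (hGb j')
        ((hmean j).trans (hmean j').symm)
  have : Nonempty (Fin N) := ⟨⟨0, hN⟩⟩
  have hbound := integral_sq_average_sub_le hG2 hmean Fintype.card_ne_zero hcov
  simp only [← mul_sum] at hbound
  rw [mul_left_comm, inv_card_sq_mul_sum_sum_one_sub_prod_ite] at hbound
  simp only [Fintype.card_pi, Fintype.card_fin, prod_const, card_univ, Nat.cast_pow] at hbound
  rwa [mul_comm] at hbound

/-- Monte Carlo error bound for product-form estimators: if the `X ℓ i` are independent with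
`X ℓ i ~ ν ℓ`, then for every bounded measurable `φ` the mean squared error of the
product-form average against `∫ φ d(ν₀ ⊗ ⋯ ⊗ ν_L)` is at most `(1 - (1 - 1/N)^(L+1)) ‖φ‖∞²`. -/
theorem stmt3 {Ω 𝒳 : Type*} [MeasurableSpace Ω] [MeasurableSpace 𝒳]
    (P : Measure Ω) [IsProbabilityMeasure P]
    (N L : ℕ) (hN : 1 ≤ N)
    (ν : Fin (L + 1) → Measure 𝒳) (hν : ∀ ℓ, IsProbabilityMeasure (ν ℓ))
    (X : Fin (L + 1) → Fin N → Ω → 𝒳)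
    (hmeas : ∀ ℓ i, Measurable (X ℓ i))
    (hindep : iIndepFun (fun p : Fin (L + 1) × Fin N => X p.1 p.2) P)
    (hlaw : ∀ ℓ i, Measure.map (X ℓ i) P = ν ℓ)
    (φ : (Fin (L + 1) → 𝒳) → ℝ) (hφmeas : Measurable φ)
    (C : ℝ) (hφb : ∀ x, |φ x| ≤ C) :
    ∫ ω, (((N : ℝ) ^ (L + 1))⁻¹ *
          (∑ j : Fin (L + 1) → Fin N, φ fun ℓ => X ℓ (j ℓ) ω)
        - ∫ x, φ x ∂(Measure.pi ν)) ^ 2 ∂P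
      ≤ (1 - (1 - 1 / (N : ℝ)) ^ (L + 1)) * C ^ 2 :=
  stmt3_general P N L hN ν X hmeas hindep hlaw φ hφmeas C hφb
end

section
/- Let E be a compact subset of ℝ^d, let (Θ, 𝒜) be a measurable space, let f : E × Θ → ℝ be bounded, measurable in θ for each fixed ξ, and continuous in ξ for each fixed θ, and let μ be a probability measure on Θ; set I(ξ) = ∫ f(ξ, θ) μ(dθ). On a probability space (Ω, F, P), let (μ_N)_{N ≥ 1} be random probability measures on Θ (i.e., Markov kernels from Ω to Θ) such that for every bounded measurable ψ : Θ → ℝ, the real random variables ω ↦ ∫ ψ d(μ_N(ω)) converge in probability to ∫ ψ dμ as N → ∞. Define I^N(ω, ξ) = ∫ f(ξ, θ) (μ_N(ω))(dθ). Then sup_{ξ ∈ E} | I^N(ξ) − I(ξ) | converges to 0 in probability as N → ∞ (this supremum is a measurable random variable, since f is continuous in ξ). -/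
/-!
Cover the compact set `E` by finitely many closed balls `B(ξᵢ, δᵢ)` and control `f ξ` on each
ball by `f ξᵢ` plus the local oscillation
`gᵢ θ = ballOsc f ξᵢ δᵢ θ = sup_{ξ ∈ B(ξᵢ, δᵢ)} |f ξ θ - f ξᵢ θ|`.
Pointwise continuity and dominated convergence make `∫ gᵢ dμ` as small as we like for small `δᵢ`,
and `gᵢ` is measurable because the supremum may be taken over a countable dense subset.
The uniform error is then bounded by finitely many errors `|∫ ψ dμ_N - ∫ ψ dμ|` with
`ψ ∈ {f ξᵢ, gᵢ}`, each of which tends to `0` in probability by assumption.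
-/

open MeasureTheory ProbabilityTheory Filter Topology Metric

theorem measurable_iSup_of_continuous {ι Θ : Type*} [TopologicalSpace ι]
    [TopologicalSpace.SeparableSpace ι] [MeasurableSpace Θ] {F : ι → Θ → ℝ}
    (hmeas : ∀ i, Measurable (F i)) (hcont : ∀ θ, Continuous fun i => F i θ) :
    Measurable fun θ => ⨆ i, F i θ := by
  obtain ⟨D, hDc, hD⟩ := TopologicalSpace.exists_countable_dense ι
  have := hDc.to_subtype
  simp_rw [← hD.ciSup' (hcont _)]
  exact Measurable.iSup fun i => hmeas i

theorem tendsto_measure_union_zero {α β : Type*} [MeasurableSpace α] {P : Measure α}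
    {l : Filter β} {A B : β → Set α} (hA : Tendsto (fun n => P (A n)) l (𝓝 0))
    (hB : Tendsto (fun n => P (B n)) l (𝓝 0)) :
    Tendsto (fun n => P (A n ∪ B n)) l (𝓝 0) :=
  tendsto_of_tendsto_of_tendsto_of_le_of_le tendsto_const_nhds (by simpa using hA.add hB)
    (fun _ => bot_le) fun _ => measure_union_le _ _

theorem tendsto_measure_zero_of_subset_biUnion {ι α β : Type*} [MeasurableSpace α]
    {P : Measure α} {l : Filter β} (t : Finset ι) {A : β → Set α} {B : ι → β → Set α}
    (hAB : ∀ n, A n ⊆ ⋃ i ∈ t, B i n) (hB : ∀ i ∈ t, Tendsto (fun n => P (B i n)) l (𝓝 0)) :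
    Tendsto (fun n => P (A n)) l (𝓝 0) :=
  tendsto_of_tendsto_of_tendsto_of_le_of_le tendsto_const_nhds
    (by simpa using tendsto_finsetSum t hB) (fun _ => bot_le)
    fun n => (measure_mono (hAB n)).trans (measure_biUnion_finset_le t _)

theorem abs_sub_le_two_mul {X Θ : Type*} {f : X → Θ → ℝ} {C : ℝ} (hf : ∀ x θ, |f x θ| ≤ C)
    (x y : X) (θ : Θ) : |f y θ - f x θ| ≤ 2 * C := by
  linarith [abs_sub (f y θ) (f x θ), hf x θ, hf y θ]

section BallOsc

variable {X Θ : Type*} [PseudoMetricSpace X] {f : X → Θ → ℝ} {C : ℝ}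

noncomputable def ballOsc (f : X → Θ → ℝ) (x : X) (δ : ℝ) (θ : Θ) : ℝ :=
  ⨆ y : closedBall x δ, |f y θ - f x θ|

theorem abs_sub_le_ballOsc (hf : ∀ x θ, |f x θ| ≤ C) {x y : X} {δ : ℝ} (h : dist y x ≤ δ)
    (θ : Θ) : |f y θ - f x θ| ≤ ballOsc f x δ θ :=
  le_ciSup (f := fun y : closedBall x δ => |f y θ - f x θ|)
    ⟨2 * C, by rintro _ ⟨z, rfl⟩; exact abs_sub_le_two_mul hf x z θ⟩ ⟨y, h⟩

theorem ballOsc_nonneg (hf : ∀ x θ, |f x θ| ≤ C) (x : X) {δ : ℝ} (hδ : 0 ≤ δ) (θ : Θ) :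
    0 ≤ ballOsc f x δ θ := by
  simpa using abs_sub_le_ballOsc hf ((dist_self x).trans_le hδ) θ

theorem abs_ballOsc_le (hf : ∀ x θ, |f x θ| ≤ C) (x : X) {δ : ℝ} (hδ : 0 ≤ δ) (θ : Θ) :
    |ballOsc f x δ θ| ≤ 2 * C := by
  have : Nonempty (closedBall x δ) := ⟨⟨x, mem_closedBall_self hδ⟩⟩
  rw [abs_of_nonneg (ballOsc_nonneg hf x hδ θ)]
  exact ciSup_le fun y => abs_sub_le_two_mul hf x y θ

theorem tendsto_ballOsc_zero (hf : ∀ x θ, |f x θ| ≤ C) (x : X) {θ : Θ}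
    (hcont : Continuous fun x => f x θ) :
    Tendsto (fun δ => ballOsc f x δ θ) (𝓝[>] 0) (𝓝 0) := by
  rw [Metric.tendsto_nhds]
  intro ε hε
  obtain ⟨η, hη, hfη⟩ := Metric.continuousAt_iff.1 hcont.continuousAt (ε / 2) (half_pos hε)
  filter_upwards [Ioo_mem_nhdsGT hη] with δ hδ
  have : Nonempty (closedBall x δ) := ⟨⟨x, mem_closedBall_self hδ.1.le⟩⟩
  rw [Real.dist_0_eq_abs, abs_of_nonneg (ballOsc_nonneg hf x hδ.1.le θ)]
  refine (ciSup_le fun y => ?_).trans_lt (half_lt_self hε)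
  exact (hfη ((mem_closedBall.1 y.2).trans_lt hδ.2)).le

variable [MeasurableSpace Θ]

theorem measurable_ballOsc [SecondCountableTopology X] (hmeas : ∀ x, Measurable (f x))
    (hcont : ∀ θ, Continuous fun x => f x θ) (x : X) (δ : ℝ) :
    Measurable (ballOsc f x δ) :=
  measurable_iSup_of_continuous (fun y => ((hmeas y).sub (hmeas x)).abs)
    fun θ => (((hcont θ).comp continuous_subtype_val).sub continuous_const).abs

theorem exists_integral_ballOsc_lt [SecondCountableTopology X] (μ : Measure Θ)
    [IsFiniteMeasure μ] (hf : ∀ x θ, |f x θ| ≤ C) (hmeas : ∀ x, Measurable (f x))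
    (hcont : ∀ θ, Continuous fun x => f x θ) (x : X) {η : ℝ} (hη : 0 < η) :
    ∃ δ > 0, ∫ θ, ballOsc f x δ θ ∂μ < η := by
  have hlim : Tendsto (fun δ => ∫ θ, ballOsc f x δ θ ∂μ) (𝓝[>] 0) (𝓝 0) := by
    simpa using tendsto_integral_filter_of_dominated_convergence (l := 𝓝[>] 0) (fun _ => 2 * C)
      (Eventually.of_forall fun δ => (measurable_ballOsc hmeas hcont x δ).aestronglyMeasurable)
      (eventually_nhdsWithin_of_forall fun δ hδ =>
        ae_of_all _ fun θ => abs_ballOsc_le hf x hδ.le θ)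
      (integrable_const _) (ae_of_all _ fun θ => tendsto_ballOsc_zero hf x (hcont θ))
  obtain ⟨δ, hδη, hδ⟩ := ((hlim.eventually_lt_const hη).and self_mem_nhdsWithin).exists
  exact ⟨δ, hδ, hδη⟩

theorem integrable_ballOsc [SecondCountableTopology X] (ν : Measure Θ) [IsFiniteMeasure ν]
    (hf : ∀ x θ, |f x θ| ≤ C) (hmeas : ∀ x, Measurable (f x))
    (hcont : ∀ θ, Continuous fun x => f x θ) (x : X) {δ : ℝ} (hδ : 0 ≤ δ) :
    Integrable (ballOsc f x δ) ν :=
  .of_bound (measurable_ballOsc hmeas hcont x δ).aestronglyMeasurable (2 * C)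
    (ae_of_all _ (abs_ballOsc_le hf x hδ))

theorem abs_integral_sub_le_integral_ballOsc [SecondCountableTopology X] (ν : Measure Θ)
    [IsFiniteMeasure ν] (hf : ∀ x θ, |f x θ| ≤ C) (hmeas : ∀ x, Measurable (f x))
    (hcont : ∀ θ, Continuous fun x => f x θ) {x y : X} {δ : ℝ} (h : dist y x ≤ δ) :
    |∫ θ, f y θ ∂ν - ∫ θ, f x θ ∂ν| ≤ ∫ θ, ballOsc f x δ θ ∂ν := by
  have hint : ∀ z, Integrable (f z) ν := fun z =>
    .of_bound (hmeas z).aestronglyMeasurable C (ae_of_all _ (hf z))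
  rw [← integral_sub (hint y) (hint x)]
  exact (abs_integral_le_integral_abs).trans <| integral_mono ((hint y).sub (hint x)).abs
    (integrable_ballOsc ν hf hmeas hcont x (dist_nonneg.trans h)) (abs_sub_le_ballOsc hf h)

theorem abs_integral_sub_integral_le [SecondCountableTopology X] (ν μ : Measure Θ)
    [IsFiniteMeasure ν] [IsFiniteMeasure μ] (hf : ∀ x θ, |f x θ| ≤ C)
    (hmeas : ∀ x, Measurable (f x)) (hcont : ∀ θ, Continuous fun x => f x θ) {x y : X} {δ : ℝ}
    (h : dist y x ≤ δ) :
    |∫ θ, f y θ ∂ν - ∫ θ, f y θ ∂μ| ≤ |∫ θ, f x θ ∂ν - ∫ θ, f x θ ∂μ|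
      + |∫ θ, ballOsc f x δ θ ∂ν - ∫ θ, ballOsc f x δ θ ∂μ| + 2 * ∫ θ, ballOsc f x δ θ ∂μ := by
  have hν := abs_integral_sub_le_integral_ballOsc ν hf hmeas hcont h
  have hμ := abs_integral_sub_le_integral_ballOsc μ hf hmeas hcont h
  linarith [abs_sub_le (∫ θ, f y θ ∂ν) (∫ θ, f x θ ∂ν) (∫ θ, f y θ ∂μ),
    abs_sub_le (∫ θ, f x θ ∂ν) (∫ θ, f x θ ∂μ) (∫ θ, f y θ ∂μ),
    abs_sub_comm (∫ θ, f x θ ∂μ) (∫ θ, f y θ ∂μ),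
    le_abs_self (∫ θ, ballOsc f x δ θ ∂ν - ∫ θ, ballOsc f x δ θ ∂μ)]

end BallOsc

/-- Uniform-in-`ξ` convergence in probability over a compact design space: if the random
probability measures `μN` converge to `μ` in probability on every bounded measurable test
function, then the random criteria `ξ ↦ ∫ f ξ θ ∂(μN n ω)` converge to
`ξ ↦ ∫ f ξ θ ∂μ` uniformly over the compact set `E`, in probability. -/
theorem stmt7 {d : ℕ} {Θ Ω : Type*} [MeasurableSpace Θ] [MeasurableSpace Ω]
    (P : Measure Ω) [IsProbabilityMeasure P]
    (E : Set (EuclideanSpace ℝ (Fin d))) (hE : IsCompact E)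
    (f : E → Θ → ℝ) (C : ℝ)
    (hfb : ∀ ξ θ, |f ξ θ| ≤ C)
    (hfmeas : ∀ ξ, Measurable (f ξ))
    (hfcont : ∀ θ, Continuous fun ξ : E => f ξ θ)
    (μ : Measure Θ) [IsProbabilityMeasure μ]
    (μN : ℕ → Kernel Ω Θ) (hμN : ∀ n, IsMarkovKernel (μN n))
    (hconv : ∀ ψ : Θ → ℝ, Measurable ψ → (∃ B, ∀ x, |ψ x| ≤ B) →
      ∀ ε > (0 : ℝ),
        Tendsto (fun n => P {ω | ε ≤ |(∫ θ, ψ θ ∂(μN n ω)) - ∫ θ, ψ θ ∂μ|})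
          atTop (nhds 0)) :
    ∀ ε > (0 : ℝ),
      Tendsto (fun n =>
          P {ω | ε ≤ ⨆ ξ : E, |(∫ θ, f ξ θ ∂(μN n ω)) - ∫ θ, f ξ θ ∂μ|})
        atTop (nhds 0) := by
  intro ε hε
  have : CompactSpace E := isCompact_iff_compactSpace.mp hE
  have hε8 : 0 < ε / 8 := by positivity
  choose δ hδ hδμ using fun ξ => exists_integral_ballOsc_lt μ hfb hfmeas hfcont ξ hε8
  obtain ⟨t, ht⟩ := CompactSpace.elim_nhds_subcover (fun ξ => closedBall ξ (δ ξ))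
    fun ξ => closedBall_mem_nhds ξ (hδ ξ)
  refine tendsto_measure_zero_of_subset_biUnion t (fun n ω hω => ?_) fun ξ _ =>
    tendsto_measure_union_zero (hconv _ (hfmeas ξ) ⟨C, hfb ξ⟩ _ hε8)
      (hconv _ (measurable_ballOsc hfmeas hfcont ξ _)
        ⟨2 * C, abs_ballOsc_le hfb ξ (hδ ξ).le⟩ _ hε8)
  by_contra hsmall
  simp only [Set.mem_iUnion, Set.mem_union, Set.mem_ofPred_eq, not_exists, not_or,
    not_le] at hsmall
  have := hμN n
  refine (show ε ≤ _ from hω).not_gt ?_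
  refine (Real.iSup_le (fun ξ => ?_) (by positivity)).trans_lt (half_lt_self hε)
  obtain ⟨i, hi, hξi⟩ := Set.mem_iUnion₂.1 (ht.ge (Set.mem_univ ξ))
  linarith [abs_integral_sub_integral_le (μN n ω) μ hfb hfmeas hfcont (mem_closedBall.1 hξi),
    hsmall i hi, hδμ i]
end

section
/- Let E be a compact subset of ℝ^d, let (Θ, 𝒜) be a measurable space, let f : E × Θ → ℝ be bounded, measurable in θ for each fixed ξ, and continuous in ξ for each fixed θ, and let μ be a probability measure on Θ; set I(ξ) = ∫ f(ξ, θ) μ(dθ) and assume there is ξ* ∈ E with I(ξ) < I(ξ*) for every ξ ∈ E, ξ ≠ ξ*. On a probability space (Ω, F, P), let (μ_N)_{N ≥ 1} be random probability measures on Θ (i.e., Markov kernels from Ω to Θ) such that for every bounded measurable ψ : Θ → ℝ, the real random variables ω ↦ ∫ ψ d(μ_N(ω)) converge in probability to ∫ ψ dμ as N → ∞; define I^N(ω, ξ) = ∫ f(ξ, θ) (μ_N(ω))(dθ). Suppose there exist nonnegative random variables ρ_N converging to 0 in probability and measurable E-valued random elements ξ_N such that liminf_{N → ∞} P( I^N(ξ_N)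 ≥ I^N(ξ*) − ρ_N ) = 1. Then ξ_N is a consistent estimator of ξ*: for every ε > 0, lim_{N → ∞} P( ‖ξ_N − ξ*‖ ≥ ε ) = 0. -/
/-! Points at distance at least `ε` from `ξ*` form a compact set `K` on which `I < I ξ*`. Each
point of `K` has a neighbourhood on which `f ξ ·` is dominated by a single bounded measurable `ψ`
with `∫ ψ dμ < I ξ*`; finitely many such `ψ` cover `K`, with a common gap `δ`. Convergence in
probability of `∫ ψ dμ_N` for these finitely many `ψ` and for `f ξ* ·`, together with `ρ_N → 0`,
leaves near-maximization by a `ξ_N ∈ K` only on events of vanishing probability. -/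

open MeasureTheory ProbabilityTheory Filter Topology Set

section Supremum

variable {X : Type*} [TopologicalSpace X] {g : X → ℝ}

lemma le_ciSup_of_mem_closure (hg : Continuous g) {s : Set X} (hs : BddAbove (g '' s)) {x : X}
    (hx : x ∈ closure s) : g x ≤ ⨆ p : s, g p := by
  rw [image_eq_range] at hs
  exact closure_minimal (fun y hy => le_ciSup hs ⟨y, hy⟩)
    (isClosed_le hg continuous_const) hx

lemma tendsto_ciSup_of_tendsto_smallSets {ι : Type*} {l : Filter ι} {x : X} (hg : ContinuousAt g x)
    {S : ι → Set X} (hS : Tendsto S l (𝓝 x).smallSets) (hxS : ∀ i, x ∈ S i)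
    (hb : ∀ i, BddAbove (g '' S i)) :
    Tendsto (fun i => ⨆ p : S i, g p) l (𝓝 (g x)) := by
  have hle : ∀ i, g x ≤ ⨆ p : S i, g p := fun i =>
    le_ciSup (f := fun p : S i => g p) (image_eq_range g (S i) ▸ hb i) ⟨x, hxS i⟩
  refine tendsto_order.2 ⟨fun a ha => .of_forall fun i => ha.trans_le (hle i), fun a ha => ?_⟩
  obtain ⟨b, hxb, hba⟩ := exists_between ha
  filter_upwards [tendsto_smallSets_iff.1 hS _ (hg.eventually (gt_mem_nhds hxb))] with i hi
  have : Nonempty (S i) := ⟨⟨x, hxS i⟩⟩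
  exact (ciSup_le fun p => (hi p.2).le).trans_lt hba

end Supremum

lemma integral_mono_of_abs_le {Θ : Type*} [MeasurableSpace Θ] {ν : Measure Θ} [IsFiniteMeasure ν]
    {φ ψ : Θ → ℝ} {C : ℝ} (hφ : Measurable φ) (hψ : Measurable ψ) (hφC : ∀ θ, |φ θ| ≤ C)
    (hψC : ∀ θ, |ψ θ| ≤ C) (h : φ ≤ ψ) : ∫ θ, φ θ ∂ν ≤ ∫ θ, ψ θ ∂ν :=
  integral_mono (.of_bound hφ.aestronglyMeasurable C (ae_of_all _ hφC))
    (.of_bound hψ.aestronglyMeasurable C (ae_of_all _ hψC)) h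

section Majorant

variable {X Θ : Type*} [TopologicalSpace X] [FirstCountableTopology X]
  [TopologicalSpace.SeparableSpace X] [MeasurableSpace Θ] {f : X → Θ → ℝ} {C : ℝ}

/-- The majorant is a supremum of `f ξ` over `ξ` in a countable dense subset of a small
neighbourhood, which keeps it measurable; continuity in `ξ` makes it dominate `f ξ` on the whole
neighbourhood and, by dominated convergence, brings its integral close to that of `f ξ₀`. -/
lemma exists_majorant_nhds_integral_lt (hfb : ∀ ξ θ, |f ξ θ| ≤ C)
    (hfmeas : ∀ ξ, Measurable (f ξ)) (hfcont : ∀ θ, Continuous fun ξ => f ξ θ)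
    (μ : Measure Θ) [IsFiniteMeasure μ] {ξ₀ : X} {c : ℝ} (hlt : ∫ θ, f ξ₀ θ ∂μ < c) :
    ∃ ψ : Θ → ℝ, Measurable ψ ∧ (∀ θ, |ψ θ| ≤ C) ∧ (∀ᶠ ξ in 𝓝 ξ₀, ∀ θ, f ξ θ ≤ ψ θ) ∧
      ∫ θ, ψ θ ∂μ < c := by
  obtain ⟨D, hDc, hD⟩ := TopologicalSpace.exists_countable_dense X
  obtain ⟨U, hUo, hU⟩ := (nhds_basis_opens ξ₀).exists_antitone_subbasis
  set S : ℕ → Set X := fun n => U n ∩ insert ξ₀ D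
  set g : ℕ → Θ → ℝ := fun n θ => ⨆ p : S n, f p θ
  have hξ₀S : ∀ n, ξ₀ ∈ S n := fun n => ⟨(hUo n).1, mem_insert _ _⟩
  have hbdd : ∀ n θ, BddAbove ((f · θ) '' S n) := fun n θ =>
    ⟨C, by rintro _ ⟨p, -, rfl⟩; exact (abs_le.1 (hfb p θ)).2⟩
  have hmaj : ∀ n, ∀ ξ ∈ U n, ∀ θ, f ξ θ ≤ g n θ := fun n ξ hξ θ =>
    le_ciSup_of_mem_closure (hfcont θ) (hbdd n θ)
      ((hD.mono (subset_insert _ _)).open_subset_closure_inter (hUo n).2 hξ)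
  have hgb : ∀ n θ, |g n θ| ≤ C := fun n θ => by
    have : Nonempty (S n) := ⟨⟨ξ₀, hξ₀S n⟩⟩
    exact abs_le.2 ⟨(abs_le.1 (hfb ξ₀ θ)).1.trans (hmaj n ξ₀ (hUo n).1 θ),
      ciSup_le fun p => (abs_le.1 (hfb p θ)).2⟩
  have hgm : ∀ n, Measurable (g n) := fun n => by
    have : Countable (S n) := ((hDc.insert ξ₀).mono inter_subset_right).to_subtype
    exact .iSup fun p => hfmeas p
  have hlim : Tendsto (fun n => ∫ θ, g n θ ∂μ) atTop (𝓝 (∫ θ, f ξ₀ θ ∂μ)) :=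
    tendsto_integral_of_dominated_convergence (fun _ => C) (fun n => (hgm n).aestronglyMeasurable)
      (integrable_const C) (fun n => ae_of_all _ (hgb n))
      (ae_of_all _ fun θ => tendsto_ciSup_of_tendsto_smallSets (hfcont θ).continuousAt
        (hU.tendsto_smallSets.smallSets_mono (.of_forall fun _ => inter_subset_left)) hξ₀S
        (hbdd · θ))
  obtain ⟨n, hn⟩ := (hlim.eventually_lt_const hlt).exists
  exact ⟨g n, hgm n, hgb n, mem_of_superset ((hUo n).2.mem_nhds (hUo n).1) (hmaj n), hn⟩

lemma IsCompact.exists_finset_majorants {K : Set X} (hK : IsCompact K)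
    (hfb : ∀ ξ θ, |f ξ θ| ≤ C) (hfmeas : ∀ ξ, Measurable (f ξ))
    (hfcont : ∀ θ, Continuous fun ξ => f ξ θ) (μ : Measure Θ) [IsFiniteMeasure μ] {c : ℝ}
    (hKc : ∀ ξ ∈ K, ∫ θ, f ξ θ ∂μ < c) :
    ∃ Ψ : Finset (Θ → ℝ), (∀ ψ ∈ Ψ, Measurable ψ ∧ (∀ θ, |ψ θ| ≤ C) ∧ ∫ θ, ψ θ ∂μ < c) ∧
      ∀ ξ ∈ K, ∃ ψ ∈ Ψ, ∀ θ, f ξ θ ≤ ψ θ := by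
  classical
  choose! ψ hψm hψb hψf hψc using fun ξ (hξ : ξ ∈ K) =>
    exists_majorant_nhds_integral_lt hfb hfmeas hfcont μ (hKc ξ hξ)
  obtain ⟨t, htK, hKt⟩ := hK.elim_nhds_subcover (fun ξ => {ξ' | ∀ θ, f ξ' θ ≤ ψ ξ θ}) hψf
  refine ⟨t.image ψ, Finset.forall_mem_image.2 fun ξ hξ => ?_, fun ξ hξ => ?_⟩
  · exact ⟨hψm ξ (htK ξ hξ), hψb ξ (htK ξ hξ), hψc ξ (htK ξ hξ)⟩
  · obtain ⟨ξ', hξ't, hξξ'⟩ := mem_iUnion₂.1 (hKt hξ)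
    exact ⟨ψ ξ', Finset.mem_image_of_mem ψ hξ't, hξξ'⟩

end Majorant

lemma Finset.exists_pos_forall_add_lt {α : Type*} (s : Finset α) {g : α → ℝ} {c : ℝ}
    (h : ∀ a ∈ s, g a < c) : ∃ δ > 0, ∀ a ∈ s, g a + δ < c := by
  have : ∀ᶠ δ in 𝓝[>] (0 : ℝ), ∀ a ∈ s, g a + δ < c :=
    (eventually_all_finset s).2 fun a ha => nhdsWithin_le_nhds <|
      (eventually_lt_nhds (sub_pos.2 (h a ha))).mono fun δ hδ => by linarith
  obtain ⟨δ, hδ, hδpos⟩ := (this.and self_mem_nhdsWithin).exists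
  exact ⟨δ, hδpos, hδ⟩

section Probability

variable {Ω ι : Type*} [MeasurableSpace Ω] {P : Measure Ω} {l : Filter ι}

lemma tendsto_measure_union_zero_s9 {s t : ι → Set Ω} (hs : Tendsto (fun i => P (s i)) l (𝓝 0))
    (ht : Tendsto (fun i => P (t i)) l (𝓝 0)) : Tendsto (fun i => P (s i ∪ t i)) l (𝓝 0) :=
  tendsto_of_tendsto_of_tendsto_of_le_of_le tendsto_const_nhds (by simpa using hs.add ht)
    (fun _ => zero_le) fun _ => measure_union_le _ _

lemma tendsto_measure_biUnion_finset_zero {κ : Type*} (J : Finset κ) {u : κ → ι → Set Ω}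
    (hu : ∀ j ∈ J, Tendsto (fun i => P (u j i)) l (𝓝 0)) :
    Tendsto (fun i => P (⋃ j ∈ J, u j i)) l (𝓝 0) :=
  tendsto_of_tendsto_of_tendsto_of_le_of_le tendsto_const_nhds
    (by simpa using tendsto_finsetSum J hu) (fun _ => zero_le)
    fun _ => measure_biUnion_finset_le J _

variable [IsProbabilityMeasure P]

lemma measure_le_add_one_sub_of_inter_subset {s t u : Set Ω} (hs : MeasurableSet s)
    (h : s ∩ t ⊆ u) : P s ≤ P u + (1 - P t) := by
  have hPt : P t ≤ P u + (1 - P s) :=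
    calc P t = P (t ∩ s) + P (t \ s) := (measure_inter_add_sdiff t hs).symm
      _ ≤ P u + P sᶜ := add_le_add (measure_mono (inter_comm t s ▸ h))
          (measure_mono fun _ hx => hx.2)
      _ = P u + (1 - P s) := by rw [prob_compl_eq_one_sub hs]
  calc P s = 1 - (1 - P s) := (ENNReal.sub_sub_cancel ENNReal.one_ne_top prob_le_one).symm
    _ ≤ P u + (1 - P t) := by
      rw [tsub_le_iff_right]
      calc 1 ≤ 1 - P t + P t := le_tsub_add
        _ ≤ 1 - P t + (P u + (1 - P s)) := by gcongr
        _ = P u + (1 - P t) + (1 - P s) := by ring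

lemma tendsto_measure_zero_of_inter_subset {s t u : ι → Set Ω} (hs : ∀ i, MeasurableSet (s i))
    (h : ∀ i, s i ∩ t i ⊆ u i) (ht : Tendsto (fun i => P (t i)) l (𝓝 1))
    (hu : Tendsto (fun i => P (u i)) l (𝓝 0)) : Tendsto (fun i => P (s i)) l (𝓝 0) := by
  have : Tendsto (fun i => P (u i) + (1 - P (t i))) l (𝓝 0) := by
    simpa using hu.add (ENNReal.Tendsto.sub tendsto_const_nhds ht (.inl ENNReal.one_ne_top))
  exact tendsto_of_tendsto_of_tendsto_of_le_of_le tendsto_const_nhds this (fun _ => zero_le)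
    fun i => measure_le_add_one_sub_of_inter_subset (hs i) (h i)

lemma tendsto_measure_of_liminf_eq_one {t : ι → Set Ω} (h : liminf (fun i => P (t i)) l = 1) :
    Tendsto (fun i => P (t i)) l (𝓝 1) :=
  tendsto_of_le_liminf_of_limsup_le h.ge
    (limsup_le_of_le (by isBoundedDefault) (.of_forall fun _ => prob_le_one))

end Probability

theorem stmt9_general {d : ℕ} {Θ Ω : Type*} [MeasurableSpace Θ] [MeasurableSpace Ω]
    (P : Measure Ω) [IsProbabilityMeasure P]
    (E : Set (EuclideanSpace ℝ (Fin d))) (hE : IsCompact E)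
    (f : E → Θ → ℝ) (C : ℝ)
    (hfb : ∀ ξ θ, |f ξ θ| ≤ C)
    (hfmeas : ∀ ξ, Measurable (f ξ))
    (hfcont : ∀ θ, Continuous fun ξ : E => f ξ θ)
    (μ : Measure Θ) [IsProbabilityMeasure μ]
    (ξs : E)
    (hmax : ∀ ξ : E, ξ ≠ ξs → (∫ θ, f ξ θ ∂μ) < ∫ θ, f ξs θ ∂μ)
    (μN : ℕ → Kernel Ω Θ) (hμN : ∀ n, IsMarkovKernel (μN n))
    (hconv : ∀ ψ : Θ → ℝ, Measurable ψ → (∃ B, ∀ x, |ψ x| ≤ B) →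
      ∀ ε > (0 : ℝ),
        Tendsto (fun n => P {ω | ε ≤ |(∫ θ, ψ θ ∂(μN n ω)) - ∫ θ, ψ θ ∂μ|})
          atTop (nhds 0))
    (ρ : ℕ → Ω → ℝ)
    (hρ_tendsto : ∀ ε > (0 : ℝ),
      Tendsto (fun n => P {ω | ε ≤ ρ n ω}) atTop (nhds 0))
    (ξN : ℕ → Ω → E) (hξN_meas : ∀ n, Measurable (ξN n))
    (hliminf : liminf (fun n =>
        P {ω | (∫ θ, f ξs θ ∂(μN n ω)) - ρ n ω ≤ ∫ θ, f (ξN n ω) θ ∂(μN n ω)})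
      atTop = 1) :
    ∀ ε > (0 : ℝ),
      Tendsto (fun n => P {ω | ε ≤ ‖(ξN n ω : EuclideanSpace ℝ (Fin d)) - ξs‖})
        atTop (nhds 0) := by
  intro ε hε
  have : CompactSpace E := isCompact_iff_compactSpace.mp hE
  set K : Set E := {ξ | ε ≤ ‖(ξ : EuclideanSpace ℝ (Fin d)) - ξs‖}
  have hK : IsCompact K := (isClosed_le continuous_const (by fun_prop)).isCompact
  have hKmax : ∀ ξ ∈ K, ∫ θ, f ξ θ ∂μ < ∫ θ, f ξs θ ∂μ := fun ξ hξ =>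
    hmax ξ fun h => by simp [K, h] at hξ; linarith
  obtain ⟨Ψ, hΨ, hKΨ⟩ := hK.exists_finset_majorants hfb hfmeas hfcont μ hKmax
  obtain ⟨δ, hδ, hΨδ⟩ := Ψ.exists_pos_forall_add_lt fun ψ hψ => (hΨ ψ hψ).2.2
  classical
  refine tendsto_measure_zero_of_inter_subset
    (u := fun n => {ω | δ / 3 ≤ ρ n ω} ∪
      ⋃ φ ∈ insert (f ξs) Ψ, {ω | δ / 3 ≤ |∫ θ, φ θ ∂(μN n ω) - ∫ θ, φ θ ∂μ|})
    (fun n => measurableSet_le measurable_const (by fun_prop)) ?_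
    (tendsto_measure_of_liminf_eq_one hliminf) ?_
  · rintro n ω ⟨hfar, hnear⟩
    obtain ⟨ψ, hψΨ, hfψ⟩ := hKΨ _ hfar
    have hmono : ∫ θ, f (ξN n ω) θ ∂(μN n ω) ≤ ∫ θ, ψ θ ∂(μN n ω) :=
      integral_mono_of_abs_le (hfmeas _) (hΨ ψ hψΨ).1 (hfb _) (hΨ ψ hψΨ).2.1 hfψ
    by_contra! hdev
    simp only [mem_union, mem_ofPred_eq, mem_iUnion, Finset.mem_insert, exists_prop, not_or,
      not_exists, not_and, not_le] at hdev hnear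
    have hξs := abs_lt.1 (hdev.2 _ (.inl rfl))
    have hψ := abs_lt.1 (hdev.2 ψ (.inr hψΨ))
    -- `I ξs - δ/3 < I^N ξs ≤ I^N ξN + ρ ≤ ∫ ψ dμN + ρ < ∫ ψ dμ + 2δ/3 < I ξs - δ/3`
    linarith [hΨδ ψ hψΨ, hdev.1]
  · have hΦ : ∀ φ ∈ insert (f ξs) Ψ, Measurable φ ∧ ∀ θ, |φ θ| ≤ C :=
      Finset.forall_mem_insert _ _ _ |>.2
        ⟨⟨hfmeas ξs, hfb ξs⟩, fun ψ hψ => ⟨(hΨ ψ hψ).1, (hΨ ψ hψ).2.1⟩⟩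
    exact tendsto_measure_union_zero_s9 (hρ_tendsto _ (by positivity))
      (tendsto_measure_biUnion_finset_zero _ fun φ hφ =>
        hconv φ (hΦ φ hφ).1 ⟨C, (hΦ φ hφ).2⟩ _ (by positivity))

/-- Consistency of the sequential design estimators: under uniform convergence in
probability of the particle criteria (ensured by convergence of the random measures `μN`
on bounded measurable test functions), a unique global maximizer `ξ*` of
`I ξ = ∫ f ξ θ ∂μ` on the compact set `E`, and near-maximization of the random criteria by
`ξN` up to slacks `ρN → 0` in probability, the estimators `ξN` converge to `ξ*` in
probability. -/
theorem stmt9 {d : ℕ} {Θ Ω : Type*} [MeasurableSpace Θ] [MeasurableSpace Ω]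
    (P : Measure Ω) [IsProbabilityMeasure P]
    (E : Set (EuclideanSpace ℝ (Fin d))) (hE : IsCompact E)
    (f : E → Θ → ℝ) (C : ℝ)
    (hfb : ∀ ξ θ, |f ξ θ| ≤ C)
    (hfmeas : ∀ ξ, Measurable (f ξ))
    (hfcont : ∀ θ, Continuous fun ξ : E => f ξ θ)
    (μ : Measure Θ) [IsProbabilityMeasure μ]
    (ξs : E)
    (hmax : ∀ ξ : E, ξ ≠ ξs → (∫ θ, f ξ θ ∂μ) < ∫ θ, f ξs θ ∂μ)
    (μN : ℕ → Kernel Ω Θ) (hμN : ∀ n, IsMarkovKernel (μN n))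
    (hconv : ∀ ψ : Θ → ℝ, Measurable ψ → (∃ B, ∀ x, |ψ x| ≤ B) →
      ∀ ε > (0 : ℝ),
        Tendsto (fun n => P {ω | ε ≤ |(∫ θ, ψ θ ∂(μN n ω)) - ∫ θ, ψ θ ∂μ|})
          atTop (nhds 0))
    (ρ : ℕ → Ω → ℝ) (hρ_nonneg : ∀ n ω, 0 ≤ ρ n ω) (hρ_meas : ∀ n, Measurable (ρ n))
    (hρ_tendsto : ∀ ε > (0 : ℝ),
      Tendsto (fun n => P {ω | ε ≤ ρ n ω}) atTop (nhds 0))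
    (ξN : ℕ → Ω → E) (hξN_meas : ∀ n, Measurable (ξN n))
    (hliminf : liminf (fun n =>
        P {ω | (∫ θ, f ξs θ ∂(μN n ω)) - ρ n ω ≤ ∫ θ, f (ξN n ω) θ ∂(μN n ω)})
      atTop = 1) :
    ∀ ε > (0 : ℝ),
      Tendsto (fun n => P {ω | ε ≤ ‖(ξN n ω : EuclideanSpace ℝ (Fin d)) - ξs‖})
        atTop (nhds 0) :=
  stmt9_general P E hE f C hfb hfmeas hfcont μ ξs hmax μN hμN hconv ρ hρ_tendsto ξN hξN_meas hliminf
end
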